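/- If E is a non-full Hilbert B-module (i.e. the range ideal B_E = closed span of ⟨E,E⟩ is a proper ideal of B), then B and B_E are non-isomorphic correspondences from B to B that both induce the identity on E: E ⊙ B ≅ E ≅ E ⊙ B_E with a ⊙ id acting as a in both cases. Hence the multiplicity correspondence in the representation theorem is not unique when E is not full. -/

import Mathlib

open scoped RightActions
open Filter Topology

noncomputable section

namespace CStarMod

set_option linter.unusedSectionVars false

/-- A Hilbert C⋆-module over `A` with a *right* `A`-action and inner product linear in the
second argument, `⟪x, y <• a⟫ = ⟪x, y⟫ * a`: Mathlib's `CStarModule` as it was when this file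
was written (Mathlib has since switched to left modules). -/
class CStarModule (A E : Type*) [NonUnitalSemiring A] [StarRing A]
    [Module ℂ A] [AddCommGroup E] [Module ℂ E] [PartialOrder A] [SMul Aᵐᵒᵖ E] [Norm A] [Norm E]
    extends Inner A E where
  inner_add_right {x} {y} {z} : inner x (y + z) = inner x y + inner x z
  inner_self_nonneg {x} : 0 ≤ inner x x
  inner_self {x} : inner x x = 0 ↔ x = 0
  inner_op_smul_right {a : A} {x y : E} : inner x (y <• a) = inner x y * a
  inner_smul_right_complex {z : ℂ} {x} {y} : inner x (z • y) = z • inner x y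
  star_inner x y : star (inner x y) = inner y x
  norm_eq_sqrt_norm_inner_self x : ‖x‖ = √‖inner x x‖

attribute [simp] CStarModule.inner_add_right CStarModule.star_inner
  CStarModule.inner_op_smul_right CStarModule.inner_smul_right_complex

namespace CStarModule

section general

variable {A E : Type*} [NonUnitalRing A] [StarRing A] [AddCommGroup E] [Module ℂ A]
  [Module ℂ E] [PartialOrder A] [SMul Aᵐᵒᵖ E] [Norm A] [Norm E] [CStarModule A E]

@[simp]
lemma inner_add_left {x y z : E} : inner A (x + y) z = inner A x z + inner A y z := by
  rw [← star_star (r := inner A (x + y) z)]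
  simp only [inner_add_right, star_add, star_inner]

@[simp]
lemma inner_op_smul_left {a : A} {x y : E} : inner A (x <• a) y = star a * inner A x y := by
  rw [← star_inner]; simp

section StarModule

variable [StarModule ℂ A]

@[simp]
lemma inner_smul_left_complex {z : ℂ} {x y : E} :
    inner A (z • x) y = star z • inner A x y := by
  rw [← star_inner]
  simp

@[simp]
lemma inner_smul_left_real {z : ℝ} {x y : E} : inner A (z • x) y = z • inner A x y := by
  have h₁ : z • x = (z : ℂ) • x := by simp
  rw [h₁, ← star_inner, inner_smul_right_complex]
  simp

@[simp]
lemma inner_smul_right_real {z : ℝ} {x y : E} : inner A x (z • y) = z • inner A x y := by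
  have h₁ : z • y = (z : ℂ) • y := by simp
  rw [h₁, ← star_inner, inner_smul_left_complex]
  simp

/-- The function `⟨x, y⟩ ↦ ⟪x, y⟫` bundled as a sesquilinear map. -/
def innerₛₗ : E →ₗ⋆[ℂ] E →ₗ[ℂ] A where
  toFun x := { toFun := fun y => inner A x y
               map_add' := fun z y => by simp
               map_smul' := fun z y => by simp }
  map_add' z y := by ext; simp
  map_smul' z y := by ext; simp

lemma innerₛₗ_apply {x y : E} : innerₛₗ x y = inner A x y := rfl

@[simp] lemma inner_zero_right {x : E} : inner A x 0 = 0 := by simp [← innerₛₗ_apply]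
@[simp] lemma inner_zero_left {x : E} : inner A 0 x = 0 := by simp [← innerₛₗ_apply]
@[simp] lemma inner_neg_right {x y : E} : inner A x (-y) = -inner A x y := by
  simp [← innerₛₗ_apply]
@[simp] lemma inner_neg_left {x y : E} : inner A (-x) y = -inner A x y := by
  simp [← innerₛₗ_apply]
@[simp] lemma inner_sub_right {x y z : E} : inner A x (y - z) = inner A x y - inner A x z := by
  simp [← innerₛₗ_apply]
@[simp] lemma inner_sub_left {x y z : E} : inner A (x - y) z = inner A x z - inner A y z := by
  simp [← innerₛₗ_apply]

end StarModule

end general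

section norm

variable {A E : Type*} [NonUnitalCStarAlgebra A] [PartialOrder A] [AddCommGroup E]
  [Module ℂ E] [SMul Aᵐᵒᵖ E] [Norm E] [CStarModule A E]

lemma norm_sq_eq (A : Type*) {E : Type*} [NonUnitalCStarAlgebra A] [PartialOrder A]
    [AddCommGroup E] [Module ℂ E] [SMul Aᵐᵒᵖ E] [Norm E] [CStarModule A E] {x : E} :
    ‖x‖ ^ 2 = ‖inner A x x‖ := by
  simp [norm_eq_sqrt_norm_inner_self (A := A)]

protected lemma norm_nonneg (A : Type*) {E : Type*} [NonUnitalCStarAlgebra A] [PartialOrder A]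
    [AddCommGroup E] [Module ℂ E] [SMul Aᵐᵒᵖ E] [Norm E] [CStarModule A E] {x : E} :
    0 ≤ ‖x‖ := by
  simp [norm_eq_sqrt_norm_inner_self (A := A)]

protected lemma norm_pos (A : Type*) {E : Type*} [NonUnitalCStarAlgebra A] [PartialOrder A]
    [AddCommGroup E] [Module ℂ E] [SMul Aᵐᵒᵖ E] [Norm E] [CStarModule A E] {x : E}
    (hx : x ≠ 0) : 0 < ‖x‖ := by
  simp only [norm_eq_sqrt_norm_inner_self (A := A), Real.sqrt_pos, norm_pos_iff]
  intro H
  rw [inner_self] at H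
  exact hx H

protected lemma norm_zero (A : Type*) {E : Type*} [NonUnitalCStarAlgebra A] [PartialOrder A]
    [AddCommGroup E] [Module ℂ E] [SMul Aᵐᵒᵖ E] [Norm E] [CStarModule A E] :
    ‖(0 : E)‖ = 0 := by
  simp [norm_eq_sqrt_norm_inner_self (A := A)]

/-- The C⋆-algebra-valued Cauchy-Schwarz inequality (right-module form). -/
lemma inner_mul_inner_swap_le [StarOrderedRing A] {x y : E} :
    inner A y x * inner A x y ≤ ‖x‖ ^ 2 • inner A y y := by
  rcases eq_or_ne x 0 with h | h
  · simp [h, CStarModule.norm_zero A (E := E)]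
  · have h₁ : ∀ (a : A),
        (0 : A) ≤ ‖x‖ ^ 2 • (star a * a) - ‖x‖ ^ 2 • (star a * inner A x y)
          - ‖x‖ ^ 2 • (inner A y x * a) + ‖x‖ ^ 2 • (‖x‖ ^ 2 • inner A y y) := fun a => by
      calc (0 : A) ≤ inner A (x <• a - ‖x‖ ^ 2 • y) (x <• a - ‖x‖ ^ 2 • y) :=
            inner_self_nonneg
        _ = star a * inner A x x * a - ‖x‖ ^ 2 • (star a * inner A x y)
              - ‖x‖ ^ 2 • (inner A y x * a) + ‖x‖ ^ 2 • (‖x‖ ^ 2 • inner A y y) := by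
            simp only [inner_sub_right, inner_op_smul_right, inner_sub_left,
              inner_op_smul_left, inner_smul_left_real, mul_sub, sub_mul, mul_smul_comm,
              inner_smul_right_real, smul_sub, mul_assoc, smul_mul_assoc]
            abel
        _ ≤ ‖x‖ ^ 2 • (star a * a) - ‖x‖ ^ 2 • (star a * inner A x y)
              - ‖x‖ ^ 2 • (inner A y x * a) + ‖x‖ ^ 2 • (‖x‖ ^ 2 • inner A y y) := by
            gcongr
            calc _ ≤ ‖inner A x x‖ • (star a * a) :=
                CStarAlgebra.star_left_conjugate_le_norm_smul (star_inner x x)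
              _ = (√‖inner A x x‖) ^ 2 • (star a * a) := by
                rw [Real.sq_sqrt]
                positivity
              _ = ‖x‖ ^ 2 • (star a * a) := by rw [← norm_eq_sqrt_norm_inner_self]
    specialize h₁ (inner A x y)
    simp only [star_inner, sub_self, zero_sub, le_neg_add_iff_add_le, add_zero] at h₁
    rwa [smul_le_smul_iff_of_pos_left (pow_pos (CStarModule.norm_pos A h) _)] at h₁

/-- The Cauchy-Schwarz inequality for Hilbert C⋆-modules. -/
lemma norm_inner_le [StarOrderedRing A] (E : Type*) [AddCommGroup E]
    [Module ℂ E] [SMul Aᵐᵒᵖ E] [Norm E] [CStarModule A E] {x y : E} :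
    ‖inner A x y‖ ≤ ‖x‖ * ‖y‖ := by
  have := calc ‖inner A x y‖ ^ 2 = ‖inner A y x * inner A x y‖ := by
                rw [← star_inner x, CStarRing.norm_star_mul_self, pow_two]
    _ ≤ ‖‖x‖ ^ 2 • inner A y y‖ := by
                refine CStarAlgebra.norm_le_norm_of_nonneg_of_le ?_ inner_mul_inner_swap_le
                rw [← star_inner x]
                exact star_mul_self_nonneg (inner A x y)
    _ = ‖x‖ ^ 2 * ‖inner A y y‖ := by simp [norm_smul]
    _ = ‖x‖ ^ 2 * ‖y‖ ^ 2 := by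
                simp only [norm_eq_sqrt_norm_inner_self (A := A), norm_nonneg, Real.sq_sqrt]
    _ = (‖x‖ * ‖y‖) ^ 2 := by simp only [mul_pow]
  refine (pow_le_pow_iff_left₀ (norm_nonneg (inner A x y)) ?_ (by simp)).mp this
  exact mul_nonneg (CStarModule.norm_nonneg A) (CStarModule.norm_nonneg A)

end norm

end CStarModule

namespace WithCStarModule

section Self

variable {A : Type*} [NonUnitalCStarAlgebra A] [PartialOrder A] [StarOrderedRing A]

/-- A C⋆-algebra `A` as a (right) Hilbert C⋆-module over itself, `⟪x, y⟫ = star x * y`. -/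
instance : CStarModule A A where
  inner x y := star x * y
  inner_add_right := mul_add ..
  inner_self_nonneg := star_mul_self_nonneg _
  inner_self := CStarRing.star_mul_self_eq_zero_iff _
  inner_op_smul_right := by intro a x y; rw [op_smul_eq_mul, mul_assoc]
  inner_smul_right_complex := by intro z x y; exact mul_smul_comm ..
  star_inner x y := by simp
  norm_eq_sqrt_norm_inner_self x := by
    rw [CStarRing.norm_star_mul_self, Real.sqrt_mul_self (norm_nonneg _)]

lemma inner_def (x y : A) : inner A x y = star x * y := rfl

end Self

end WithCStarModule

variable {A : Type*} [CStarAlgebra A] [PartialOrder A] [StarOrderedRing A]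
variable {E : Type*} [NormedAddCommGroup E] [NormedSpace ℂ E] [SMul Aᵐᵒᵖ E] [CStarModule A E]
variable {F : Type*} [NormedAddCommGroup F] [NormedSpace ℂ F] [SMul Aᵐᵒᵖ F] [CStarModule A F]

/-- Two elements of a Hilbert C*-module agreeing against all inner products are equal. -/
theorem ext_inner_left {x y : E} (h : ∀ w : E, inner (𝕜 := A) w x = inner (𝕜 := A) w y) :
    x = y := by
  have h0 : (inner (𝕜 := A) (x - y) (x - y) : A) = 0 := by
    rw [CStarModule.inner_sub_right, h (x - y), sub_self]
  exact sub_eq_zero.mp (CStarModule.inner_self.mp h0)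

theorem op_smul_add (x : E) (a b : A) : x <• (a + b) = x <• a + x <• b := by
  apply ext_inner_left (A := A); intro w
  rw [CStarModule.inner_op_smul_right, CStarModule.inner_add_right,
    CStarModule.inner_op_smul_right, CStarModule.inner_op_smul_right, mul_add]

theorem op_smul_csmul (x : E) (c : ℂ) (a : A) : x <• (c • a) = c • (x <• a) := by
  apply ext_inner_left (A := A); intro w
  rw [CStarModule.inner_op_smul_right, CStarModule.inner_smul_right_complex,
    CStarModule.inner_op_smul_right, mul_smul_comm]

theorem op_smul_zero (x : E) : x <• (0 : A) = 0 := by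
  apply ext_inner_left (A := A); intro w
  rw [CStarModule.inner_op_smul_right, mul_zero, CStarModule.inner_zero_right]

theorem norm_op_smul_le (x : E) (a : A) : ‖x <• a‖ ≤ ‖x‖ * ‖a‖ := by
  have h1 : ‖x <• a‖ ^ 2 = ‖star a * inner (𝕜 := A) x x * a‖ := by
    rw [CStarModule.norm_sq_eq A, CStarModule.inner_op_smul_right, CStarModule.inner_op_smul_left]
  have hx : ‖(inner (𝕜 := A) x x : A)‖ ≤ ‖x‖ * ‖x‖ := CStarModule.norm_inner_le E
  have h2 : ‖star a * inner (𝕜 := A) x x * a‖ ≤ ‖a‖ * (‖x‖ * ‖x‖) * ‖a‖ := by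
    calc ‖star a * inner (𝕜 := A) x x * a‖ ≤ ‖star a * inner (𝕜 := A) x x‖ * ‖a‖ :=
          norm_mul_le _ _
      _ ≤ ‖star a‖ * ‖(inner (𝕜 := A) x x : A)‖ * ‖a‖ := by
          gcongr; exact norm_mul_le _ _
      _ ≤ ‖a‖ * (‖x‖ * ‖x‖) * ‖a‖ := by rw [norm_star]; gcongr
  nlinarith [norm_nonneg (x <• a), norm_nonneg x, norm_nonneg a,
    mul_nonneg (norm_nonneg x) (norm_nonneg a)]

/-- An adjointable operator between Hilbert C*-modules over `A`. -/
structure Adj (A : Type*) [CStarAlgebra A] [PartialOrder A] [StarOrderedRing A]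
    (E : Type*) [NormedAddCommGroup E] [NormedSpace ℂ E] [SMul Aᵐᵒᵖ E] [CStarModule A E]
    (F : Type*) [NormedAddCommGroup F] [NormedSpace ℂ F] [SMul Aᵐᵒᵖ F] [CStarModule A F] :
    Type _ where
  toFun : E →L[ℂ] F
  adj : F →L[ℂ] E
  inner_adj : ∀ (x : E) (y : F), inner (𝕜 := A) (toFun x) y = inner (𝕜 := A) x (adj y)

namespace Adj

theorem adj_unique (f : E →L[ℂ] F) (g g' : F →L[ℂ] E)
    (h : ∀ x y, inner (𝕜 := A) (f x) y = inner (𝕜 := A) x (g y))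
    (h' : ∀ x y, inner (𝕜 := A) (f x) y = inner (𝕜 := A) x (g' y)) : g = g' := by
  ext y
  apply ext_inner_left (A := A); intro w
  rw [← h w y, h' w y]

instance : FunLike (Adj A E F) E F where
  coe a := a.toFun
  coe_injective a b h := by
    obtain ⟨f, g, hfg⟩ := a
    obtain ⟨f', g', hfg'⟩ := b
    have hf : f = f' := by ext x; exact congrFun h x
    subst hf
    have : g = g' := adj_unique f g g' hfg hfg'
    subst this; rfl

@[ext]
theorem ext {a b : Adj A E F} (h : ∀ x, a x = b x) : a = b := DFunLike.ext a b h

theorem inner_adj_apply (a : Adj A E F) (x : E) (y : F) :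
    inner (𝕜 := A) (a x) y = inner (𝕜 := A) x (a.adj y) := a.inner_adj x y

variable {G : Type*} [NormedAddCommGroup G] [NormedSpace ℂ G] [SMul Aᵐᵒᵖ G] [CStarModule A G]

/-- Composition of adjointable operators. -/
def comp (a : Adj A F G) (b : Adj A E F) : Adj A E G where
  toFun := a.toFun ∘L b.toFun
  adj := b.adj ∘L a.adj
  inner_adj x y := by
    simp only [ContinuousLinearMap.comp_apply]
    rw [a.inner_adj, b.inner_adj]

@[simp] theorem comp_apply (a : Adj A F G) (b : Adj A E F) (x : E) :
    (a.comp b) x = a (b x) := rfl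

/-- The adjoint, as an adjointable operator. -/
def star' (a : Adj A E F) : Adj A F E where
  toFun := a.adj
  adj := a.toFun
  inner_adj x y := by
    have := congrArg star (a.inner_adj y x)
    simpa using this.symm

@[simp] theorem star'_apply (a : Adj A E F) (y : F) : (star' a) y = a.adj y := rfl

instance : One (Adj A E E) :=
  ⟨{ toFun := ContinuousLinearMap.id ℂ E
     adj := ContinuousLinearMap.id ℂ E
     inner_adj := fun _ _ => rfl }⟩

instance : Mul (Adj A E E) := ⟨fun a b => a.comp b⟩

instance : Star (Adj A E E) := ⟨star'⟩

instance : Add (Adj A E F) :=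
  ⟨fun a b =>
    { toFun := a.toFun + b.toFun
      adj := a.adj + b.adj
      inner_adj := fun x y => by
        simp only [ContinuousLinearMap.add_apply, CStarModule.inner_add_left,
          CStarModule.inner_add_right, a.inner_adj, b.inner_adj] }⟩

instance : Zero (Adj A E F) :=
  ⟨{ toFun := 0
     adj := 0
     inner_adj := fun x y => by
       simp only [ContinuousLinearMap.zero_apply, CStarModule.inner_zero_left,
         CStarModule.inner_zero_right] }⟩

instance : Neg (Adj A E F) :=
  ⟨fun a =>
    { toFun := -a.toFun
      adj := -a.adj
      inner_adj := fun x y => by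
        simp only [ContinuousLinearMap.neg_apply, CStarModule.inner_neg_left,
          CStarModule.inner_neg_right, a.inner_adj] }⟩

instance : SMul ℂ (Adj A E F) :=
  ⟨fun c a =>
    { toFun := c • a.toFun
      adj := (starRingEnd ℂ c) • a.adj
      inner_adj := fun x y => by
        simp only [ContinuousLinearMap.smul_apply, CStarModule.inner_smul_left_complex,
          CStarModule.inner_smul_right_complex, a.inner_adj, starRingEnd_apply] }⟩

@[simp] theorem add_apply (a b : Adj A E F) (x : E) : (a + b) x = a x + b x := rfl
@[simp] theorem zero_apply (x : E) : (0 : Adj A E F) x = 0 := rfl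
@[simp] theorem neg_apply (a : Adj A E F) (x : E) : (-a) x = -(a x) := rfl
@[simp] theorem smul_apply (c : ℂ) (a : Adj A E F) (x : E) : (c • a) x = c • a x := rfl
@[simp] theorem mul_apply (a b : Adj A E E) (x : E) : (a * b) x = a (b x) := rfl
@[simp] theorem one_apply (x : E) : (1 : Adj A E E) x = x := rfl
@[simp] theorem star_apply (a : Adj A E E) (x : E) : (star a) x = a.adj x := rfl

instance : AddCommGroup (Adj A E F) where
  add_assoc a b c := by ext x; simp [add_assoc]
  zero_add a := by ext x; simp
  add_zero a := by ext x; simp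
  add_comm a b := by ext x; simp [add_comm]
  neg_add_cancel a := by ext x; simp
  nsmul := nsmulRec
  zsmul := zsmulRec
  sub := fun a b => a + -b
  sub_eq_add_neg a b := rfl

instance : Module ℂ (Adj A E F) where
  one_smul a := by ext x; simp
  mul_smul c d a := by ext x; simp [mul_smul]
  smul_add c a b := by ext x; simp
  smul_zero c := by ext x; simp
  add_smul c d a := by ext x; simp [add_smul]
  zero_smul a := by ext x; simp

noncomputable instance : Norm (Adj A E F) := ⟨fun a => ‖a.toFun‖⟩

theorem norm_def (a : Adj A E F) : ‖a‖ = ‖a.toFun‖ := rfl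

end Adj

/-- The rank-one operator `x y* : z ↦ x ⟨y, z⟩`. -/
def rankOne (x y : E) : Adj A E E where
  toFun := LinearMap.mkContinuous
    { toFun := fun z => x <• (inner (𝕜 := A) y z : A)
      map_add' := fun z w => by
        show x <• (inner (𝕜 := A) y (z + w) : A)
          = x <• (inner (𝕜 := A) y z : A) + x <• (inner (𝕜 := A) y w : A)
        rw [CStarModule.inner_add_right, op_smul_add]
      map_smul' := fun c z => by
        show x <• (inner (𝕜 := A) y (c • z) : A) = c • (x <• (inner (𝕜 := A) y z : A))
        rw [CStarModule.inner_smul_right_complex, op_smul_csmul] }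
    (‖x‖ * ‖y‖)
    (fun z => by
      calc ‖x <• (inner (𝕜 := A) y z : A)‖ ≤ ‖x‖ * ‖(inner (𝕜 := A) y z : A)‖ :=
            norm_op_smul_le x _
        _ ≤ ‖x‖ * (‖y‖ * ‖z‖) := by gcongr; exact CStarModule.norm_inner_le E
        _ = ‖x‖ * ‖y‖ * ‖z‖ := by ring)
  adj := LinearMap.mkContinuous
    { toFun := fun z => y <• (inner (𝕜 := A) x z : A)
      map_add' := fun z w => by
        show y <• (inner (𝕜 := A) x (z + w) : A)
          = y <• (inner (𝕜 := A) x z : A) + y <• (inner (𝕜 := A) x w : A)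
        rw [CStarModule.inner_add_right, op_smul_add]
      map_smul' := fun c z => by
        show y <• (inner (𝕜 := A) x (c • z) : A) = c • (y <• (inner (𝕜 := A) x z : A))
        rw [CStarModule.inner_smul_right_complex, op_smul_csmul] }
    (‖y‖ * ‖x‖)
    (fun z => by
      calc ‖y <• (inner (𝕜 := A) x z : A)‖ ≤ ‖y‖ * ‖(inner (𝕜 := A) x z : A)‖ :=
            norm_op_smul_le y _
        _ ≤ ‖y‖ * (‖x‖ * ‖z‖) := by gcongr; exact CStarModule.norm_inner_le E
        _ = ‖y‖ * ‖x‖ * ‖z‖ := by ring)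
  inner_adj z w := by
    show (inner (𝕜 := A) (x <• (inner (𝕜 := A) y z : A)) w : A)
      = inner (𝕜 := A) z (y <• (inner (𝕜 := A) x w : A))
    rw [CStarModule.inner_op_smul_left, CStarModule.inner_op_smul_right]
    simp [mul_assoc]

theorem rankOne_apply (x y z : E) :
    (rankOne (A := A) x y) z = x <• (inner (𝕜 := A) y z : A) := rfl

/-- Finite-rank operators: the linear span of the rank-one operators. -/
def IsFiniteRank (a : Adj A E E) : Prop :=
  a ∈ Submodule.span ℂ {b : Adj A E E | ∃ x y : E, b = rankOne x y}

/-- Compact operators: norm limits of finite-rank operators (identified via their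
underlying continuous linear maps). -/
def IsCompactOp (a : Adj A E E) : Prop :=
  a.toFun ∈ closure ((fun b : Adj A E E => b.toFun) '' {b : Adj A E E | IsFiniteRank b})

/-- The range ideal `B_E`: the closed linear span of all inner products. -/
def rangeIdeal (A : Type*) [CStarAlgebra A] [PartialOrder A] [StarOrderedRing A]
    (E : Type*) [NormedAddCommGroup E] [NormedSpace ℂ E] [SMul Aᵐᵒᵖ E] [CStarModule A E] :
    Set A :=
  closure (Submodule.span ℂ {a : A | ∃ x y : E, a = inner (𝕜 := A) x y} : Set A)

/-- `E` is full if the range ideal is all of `A`. -/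
def IsFull (A : Type*) [CStarAlgebra A] [PartialOrder A] [StarOrderedRing A]
    (E : Type*) [NormedAddCommGroup E] [NormedSpace ℂ E] [SMul Aᵐᵒᵖ E] [CStarModule A E] :
    Prop :=
  rangeIdeal A E = Set.univ

end CStarMod

namespace CStarMod

variable {B : Type*} [CStarAlgebra B] [PartialOrder B] [StarOrderedRing B]
variable {C : Type*} [CStarAlgebra C] [PartialOrder C] [StarOrderedRing C]
variable {E : Type*} [NormedAddCommGroup E] [NormedSpace ℂ E] [SMul Bᵐᵒᵖ E] [CStarModule B E]
variable {F : Type*} [NormedAddCommGroup F] [NormedSpace ℂ F] [SMul Cᵐᵒᵖ F] [CStarModule C F]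

/-- A (*-)homomorphism between algebras of adjointable operators. -/
structure IsHom (ϑ : Adj B E E → Adj C F F) : Prop where
  map_add : ∀ a b, ϑ (a + b) = ϑ a + ϑ b
  map_smul : ∀ (c : ℂ) (a : Adj B E E), ϑ (c • a) = c • ϑ a
  map_mul : ∀ a b, ϑ (a * b) = ϑ a * ϑ b
  map_star : ∀ a, ϑ (star a) = star (ϑ a)

universe u

/-- A map between spaces of adjointable operators is *strict* if it is (*-strongly)
continuous on bounded subsets: whenever a bounded net converges *-strongly, so do
the images.  (On bounded sets the strict and the *-strong topology coincide.) -/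
def Strict {E' : Type*} [NormedAddCommGroup E'] [NormedSpace ℂ E'] [SMul Bᵐᵒᵖ E']
    [CStarModule B E'] {F' : Type*} [NormedAddCommGroup F'] [NormedSpace ℂ F']
    [SMul Cᵐᵒᵖ F'] [CStarModule C F'] (ϑ : Adj B E E' → Adj C F F') : Prop :=
  ∀ ⦃ι : Type u⦄ (l : Filter ι) (b : ι → Adj B E E') (a : Adj B E E'),
    (∃ M : ℝ, ∀ i, ‖b i‖ ≤ M) →
    (∀ x : E, Filter.Tendsto (fun i => b i x) l (nhds (a x))) →
    (∀ x : E', Filter.Tendsto (fun i => (b i).adj x) l (nhds (a.adj x))) →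
    (∀ y : F, Filter.Tendsto (fun i => ϑ (b i) y) l (nhds (ϑ a y))) ∧
      (∀ y : F', Filter.Tendsto (fun i => (ϑ (b i)).adj y) l (nhds ((ϑ a).adj y)))

/-- A correspondence from `B` to `C`: a Hilbert `C`-module together with a nondegenerate
left action of `B` by adjointable operators. -/
structure Corr (B : Type*) [CStarAlgebra B] [PartialOrder B] [StarOrderedRing B]
    (C : Type*) [CStarAlgebra C] [PartialOrder C] [StarOrderedRing C]
    (F : Type*) [NormedAddCommGroup F] [NormedSpace ℂ F] [SMul Cᵐᵒᵖ F] [CStarModule C F] where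
  act : B → Adj C F F
  map_add : ∀ a b, act (a + b) = act a + act b
  map_smul : ∀ (c : ℂ) (b : B), act (c • b) = c • act b
  map_mul : ∀ a b, act (a * b) = act a * act b
  map_star : ∀ b, act (star b) = star (act b)
  nondeg : Dense (↑(Submodule.span ℂ {y : F | ∃ (b : B) (z : F), y = (act b) z}) : Set F)

/-- Data exhibiting `T` as the interior tensor product `E ⊙ F` of the Hilbert `B`-module
`E` with the correspondence `F` from `B` to `C`:  a generating family of elementary tensors
with the correct inner products. -/
structure TensorOf (ρ : Corr B C F) (E : Type*) [NormedAddCommGroup E] [NormedSpace ℂ E]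
    [SMul Bᵐᵒᵖ E] [CStarModule B E] (T : Type*) [NormedAddCommGroup T] [NormedSpace ℂ T]
    [SMul Cᵐᵒᵖ T] [CStarModule C T] where
  t : E → F → T
  inner_t : ∀ (x x' : E) (y y' : F),
    inner (𝕜 := C) (t x y) (t x' y')
      = inner (𝕜 := C) y ((ρ.act (inner (𝕜 := B) x x')) y')
  total : Dense (↑(Submodule.span ℂ {s : T | ∃ x y, s = t x y}) : Set T)

/-- Data exhibiting `T` as the two-fold interior tensor product `E ⊙ (E* ⊙ F)`, where the
left action of `K(E)` (hence of `B^a(E)`) on `F` is induced by `ϑ`:  a generating family of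
elementary tensors `x₁ ⊙ (x₂* ⊙ y)` with the correct inner products
`⟨x₁ ⊙ (x₂* ⊙ y), x₁' ⊙ (x₂'* ⊙ y')⟩ = ⟨y, ϑ(x₂⟨x₁,x₁'⟩x₂'^*)y'⟩`. -/
structure Tensor3 (ϑ : Adj B E E → Adj C F F) (T : Type*) [NormedAddCommGroup T]
    [NormedSpace ℂ T] [SMul Cᵐᵒᵖ T] [CStarModule C T] where
  t : E → E → F → T
  inner_t : ∀ (x₁ x₂ : E) (y : F) (x₁' x₂' : E) (y' : F),
    inner (𝕜 := C) (t x₁ x₂ y) (t x₁' x₂' y')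
      = inner (𝕜 := C) y ((ϑ (rankOne (x₂ <• (inner (𝕜 := B) x₁ x₁' : B)) x₂')) y')
  total : Dense (↑(Submodule.span ℂ {s : T | ∃ x₁ x₂ y, s = t x₁ x₂ y}) : Set T)

end CStarMod

namespace CStarMod

variable {B : Type*} [CStarAlgebra B] [PartialOrder B] [StarOrderedRing B]
variable {C : Type*} [CStarAlgebra C] [PartialOrder C] [StarOrderedRing C]
variable {E : Type*} [NormedAddCommGroup E] [NormedSpace ℂ E] [SMul Bᵐᵒᵖ E] [CStarModule B E]
variable {F : Type*} [NormedAddCommGroup F] [NormedSpace ℂ F] [SMul Cᵐᵒᵖ F] [CStarModule C F]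

/-- For `x : E`, the adjointable operator `x̂ : B → E`, `b ↦ x <• b`, with adjoint
`y ↦ ⟨x, y⟩`.  (For `E = B` this is left multiplication by `x`.) -/
def xhat (x : E) : Adj B B E where
  toFun := LinearMap.mkContinuous
    { toFun := fun b => x <• b
      map_add' := fun a b => op_smul_add x a b
      map_smul' := fun c a => op_smul_csmul x c a }
    ‖x‖ (fun a => norm_op_smul_le x a)
  adj := LinearMap.mkContinuous
    { toFun := fun y => (inner (𝕜 := B) x y : B)
      map_add' := fun y z => by simp
      map_smul' := fun c y => by simp }
    ‖x‖ (fun y => by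
      simpa [mul_comm] using CStarModule.norm_inner_le (A := B) E (x := x) (y := y))
  inner_adj a y := by
    show (inner (𝕜 := B) (x <• a) y : B) = inner (𝕜 := B) a ((inner (𝕜 := B) x y : B))
    rw [CStarModule.inner_op_smul_left, WithCStarModule.inner_def]

theorem xhat_apply (x : E) (b : B) : (xhat x) b = x <• b := rfl

/-- Left multiplication, as an adjointable operator on `B` viewed as a Hilbert module
over itself. -/
def leftMult (b : B) : Adj B B B := xhat b

/-- A bundled Hilbert C*-module over `B` (an object of the category `C*_B`). -/
structure HMod (B : Type*) [CStarAlgebra B] [PartialOrder B] [StarOrderedRing B] where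
  carrier : Type*
  [grp : NormedAddCommGroup carrier]
  [mod : NormedSpace ℂ carrier]
  [sm : SMul Bᵐᵒᵖ carrier]
  [cstar : CStarModule B carrier]
  [cpl : CompleteSpace carrier]

attribute [instance] HMod.grp HMod.mod HMod.sm HMod.cstar HMod.cpl

/-- `B` as an object of `C*_B`. -/
def HMod.self (B : Type*) [CStarAlgebra B] [PartialOrder B] [StarOrderedRing B] : HMod B :=
  { carrier := B }

universe v w

/-- A `*`-functor from the category of Hilbert `B`-modules (morphisms: adjointable maps)
to the category of Hilbert `C`-modules: a functor commuting with adjoints. -/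
structure StarFunctor (B : Type*) [CStarAlgebra B] [PartialOrder B] [StarOrderedRing B]
    (C : Type*) [CStarAlgebra C] [PartialOrder C] [StarOrderedRing C] where
  obj : HMod.{_, v} B → HMod.{_, w} C
  map : ∀ {X Y : HMod B}, Adj B X.carrier Y.carrier → Adj C (obj X).carrier (obj Y).carrier
  map_id : ∀ X : HMod B, map (1 : Adj B X.carrier X.carrier) = 1
  map_comp : ∀ {X Y Z : HMod B} (g : Adj B Y.carrier Z.carrier) (f : Adj B X.carrier Y.carrier),
    map (g.comp f) = (map g).comp (map f)
  map_star : ∀ {X Y : HMod B} (f : Adj B X.carrier Y.carrier), map f.star' = (map f).star'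

/-- A `*`-functor is *strict* if each of its restrictions to morphism spaces is strictly
(equivalently `*`-strongly) continuous on bounded subsets. -/
def StarFunctor.IsStrict {B : Type*} [CStarAlgebra B] [PartialOrder B] [StarOrderedRing B]
    {C : Type*} [CStarAlgebra C] [PartialOrder C] [StarOrderedRing C]
    (r : StarFunctor B C) : Prop :=
  ∀ X Y : HMod B, Strict.{0} (fun f : Adj B X.carrier Y.carrier => r.map f)

/-- A Morita equivalence from `B` to `C`: a full correspondence `M` from `B` to `C` such
that the left action is an isomorphism of `B` onto the compact operators `K(M)`. -/
structure MoritaEq (B : Type*) [CStarAlgebra B] [PartialOrder B] [StarOrderedRing B]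
    (C : Type*) [CStarAlgebra C] [PartialOrder C] [StarOrderedRing C] where
  M : Type*
  [grp : NormedAddCommGroup M]
  [mod : NormedSpace ℂ M]
  [sm : SMul Cᵐᵒᵖ M]
  [cstar : CStarModule C M]
  [cpl : CompleteSpace M]
  ρ : Corr B C M
  full : IsFull C M
  act_compact : ∀ b : B, IsCompactOp (ρ.act b)
  act_surj_compact : ∀ a : Adj C M M, IsCompactOp a → ∃ b : B, ρ.act b = a
  act_inj : Function.Injective ρ.act

attribute [instance] MoritaEq.grp MoritaEq.mod MoritaEq.sm MoritaEq.cstar MoritaEq.cpl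

/-- The orthogonal complement of a subset of a Hilbert C*-module. -/
def ortho (C : Type*) [CStarAlgebra C] [PartialOrder C] [StarOrderedRing C]
    {F : Type*} [NormedAddCommGroup F] [NormedSpace ℂ F] [SMul Cᵐᵒᵖ F] [CStarModule C F]
    (S : Set F) : Set F :=
  {y : F | ∀ s ∈ S, (inner (𝕜 := C) s y : C) = 0}

/-- A Hilbert C*-module over a von Neumann algebra is *self-dual* (a W*-module) if every
bounded `C`-linear functional `F → C` is given by an inner product. -/
def IsSelfDual (C : Type*) [CStarAlgebra C] [PartialOrder C] [StarOrderedRing C]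
    (F : Type*) [NormedAddCommGroup F] [NormedSpace ℂ F] [SMul Cᵐᵒᵖ F] [CStarModule C F] :
    Prop :=
  ∀ Φ : F →L[ℂ] C, (∀ (y : F) (c : C), Φ (y <• c) = Φ y * c) →
    ∃! z : F, ∀ y : F, Φ y = inner (𝕜 := C) z y

/-- An adjointable (not assumed bounded) linear operator between (pre-)Hilbert modules. -/
structure AdjL (A : Type*) [CStarAlgebra A] [PartialOrder A] [StarOrderedRing A]
    (E : Type*) [NormedAddCommGroup E] [NormedSpace ℂ E] [SMul Aᵐᵒᵖ E] [CStarModule A E]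
    (F : Type*) [NormedAddCommGroup F] [NormedSpace ℂ F] [SMul Aᵐᵒᵖ F] [CStarModule A F] where
  toFun : E →ₗ[ℂ] F
  adj : F →ₗ[ℂ] E
  inner_adj : ∀ (x : E) (y : F), inner (𝕜 := A) (toFun x) y = inner (𝕜 := A) x (adj y)

end CStarMod

/-!
Every `z : E` is approximated by elements `z ⟪x, y⟫`: with `h = ⟪z, z⟫` and
`b = h (h + δ)⁻¹ = ⟪z, z (h + δ)⁻¹⟫`, one has `⟪z - z b, z - z b⟫ = (1 - b) h (1 - b)`, of norm
`sup t δ² / (t + δ)² ≤ δ` over the spectrum of `h`. Hence `E · B_E` is dense in `E`, so both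
`x ⊙ b ↦ x b` and `x ⊙ s ↦ x j(s)` are unitaries onto `E`. An isomorphism `v : B → B_E` of
correspondences would make `u = j (v 1)` an isometry lying in the ideal `B_E`, and then
`1 = u* u ∈ B_E`, i.e. `E` is full.
-/

namespace CStarMod

theorem CStarModule.inner_op_smul_op_smul {A E : Type*} [NonUnitalRing A] [StarRing A]
    [AddCommGroup E] [Module ℂ A] [Module ℂ E] [PartialOrder A] [SMul Aᵐᵒᵖ E] [Norm A] [Norm E]
    [CStarModule A E] (x x' : E) (a a' : A) :
    inner A (x <• a) (x' <• a') = star a * inner A x x' * a' := by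
  rw [CStarModule.inner_op_smul_right, CStarModule.inner_op_smul_left]

theorem one_sub_mul_inv_add_mul_le {t δ : ℝ} (ht : 0 ≤ t) (hδ : 0 < δ) :
    ‖(1 - t * (t + δ)⁻¹) * t * (1 - t * (t + δ)⁻¹)‖ ≤ δ := by
  have hsub : 1 - t * (t + δ)⁻¹ = δ / (t + δ) := by field_simp; ring
  rw [hsub, Real.norm_eq_abs, abs_of_nonneg (by positivity)]
  calc δ / (t + δ) * t * (δ / (t + δ)) = δ * (t * δ / (t + δ) ^ 2) := by field_simp
    _ ≤ δ * 1 := by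
      gcongr
      rw [div_le_one (by positivity)]
      nlinarith
    _ = δ := mul_one δ

section

variable {B : Type*} [CStarAlgebra B] [PartialOrder B] [StarOrderedRing B]
  {E : Type*} [NormedAddCommGroup E] [NormedSpace ℂ E] [SMul Bᵐᵒᵖ E] [CStarModule B E]

theorem Adj.map_op_smul {F : Type*} [NormedAddCommGroup F] [NormedSpace ℂ F] [SMul Bᵐᵒᵖ F]
    [CStarModule B F] (a : Adj B E F) (x : E) (b : B) : a (x <• b) = a x <• b := by
  refine ext_inner_left (A := B) fun w => ?_
  rw [CStarModule.inner_op_smul_right, ← CStarModule.star_inner, a.inner_adj_apply,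
    CStarModule.inner_op_smul_left, star_mul, star_star, ← a.inner_adj_apply,
    CStarModule.star_inner]

theorem mul_mem_rangeIdeal (c : B) {a : B} (ha : a ∈ rangeIdeal B E) :
    c * a ∈ rangeIdeal B E := by
  set S : Submodule ℂ B := Submodule.span ℂ {a : B | ∃ x y : E, a = inner B x y}
  have hspan : S.map (LinearMap.mulLeft ℂ c) ≤ S := by
    rw [Submodule.map_span_le]
    rintro _ ⟨x, y, rfl⟩
    exact Submodule.subset_span ⟨x <• star c, y, by
      rw [LinearMap.mulLeft_apply, CStarModule.inner_op_smul_left, star_star]⟩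
  exact map_mem_closure (continuous_const_mul c) ha fun b hb => hspan ⟨b, hb, rfl⟩

theorem isFull_of_star_mul_self_eq_one {u : B} (hu : u ∈ rangeIdeal B E)
    (h : star u * u = 1) : IsFull B E :=
  Set.eq_univ_of_forall fun b => by simpa [mul_assoc, h] using mul_mem_rangeIdeal (b * star u) hu

theorem exists_norm_sub_op_smul_inner_sq_le (z : E) {δ : ℝ} (hδ : 0 < δ) :
    ∃ x y : E, ‖z - z <• inner B x y‖ ^ 2 ≤ δ := by
  set h : B := inner B z z
  have hh : 0 ≤ h := CStarModule.inner_self_nonneg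
  have hspec : ∀ t ∈ spectrum ℝ h, 0 ≤ t := fun t ht => spectrum_nonneg_of_nonneg hh ht
  have hinv : ContinuousOn (fun t : ℝ => (t + δ)⁻¹) (spectrum ℝ h) :=
    ContinuousOn.inv₀ (by fun_prop) fun t ht => by linarith [hspec t ht]
  have hf : ContinuousOn (fun t : ℝ => t * (t + δ)⁻¹) (spectrum ℝ h) := continuousOn_id.mul hinv
  have hg : ContinuousOn (fun t : ℝ => 1 - t * (t + δ)⁻¹) (spectrum ℝ h) :=
    continuousOn_const.sub hf
  set b : B := cfc (fun t : ℝ => t * (t + δ)⁻¹) h with hb_def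
  have hb : inner B z (z <• cfc (fun t : ℝ => (t + δ)⁻¹) h) = b := by
    rw [CStarModule.inner_op_smul_right, hb_def, cfc_mul (fun t : ℝ => t) _ h, cfc_id' ℝ h]
  have hb_sa : IsSelfAdjoint b := cfc_predicate _ h
  have hinner : inner B (z - z <• b) (z - z <• b) = (1 - b) * h * (1 - b) := by
    simp only [CStarModule.inner_sub_left, CStarModule.inner_sub_right,
      CStarModule.inner_op_smul_left, CStarModule.inner_op_smul_right, hb_sa.star_eq]
    noncomm_ring
  have hcfc : (1 - b) * h * (1 - b)
      = cfc (fun t : ℝ => (1 - t * (t + δ)⁻¹) * t * (1 - t * (t + δ)⁻¹)) h := by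
    rw [cfc_mul (fun t : ℝ => (1 - t * (t + δ)⁻¹) * t) _ h (hg.mul continuousOn_id) hg,
      cfc_mul _ (fun t : ℝ => t) h hg continuousOn_id,
      cfc_sub (fun _ : ℝ => 1) _ h continuousOn_const hf,
      cfc_const_one ℝ h, cfc_id' ℝ h]
  refine ⟨z, z <• cfc (fun t : ℝ => (t + δ)⁻¹) h, ?_⟩
  rw [hb, CStarModule.norm_sq_eq B, hinner, hcfc]
  exact norm_cfc_le hδ.le fun t ht => one_sub_mul_inv_add_mul_le (hspec t ht) hδ

theorem mem_closure_image_op_smul_inner (z : E) :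
    z ∈ closure ((z <• ·) '' {a : B | ∃ x y : E, a = inner B x y}) := by
  refine Metric.mem_closure_iff.mpr fun ε hε => ?_
  obtain ⟨x, y, hxy⟩ := exists_norm_sub_op_smul_inner_sq_le (B := B) z (δ := (ε / 2) ^ 2)
    (by positivity)
  refine ⟨z <• inner B x y, ⟨_, ⟨x, y, rfl⟩, rfl⟩, ?_⟩
  rw [dist_eq_norm]
  calc ‖z - z <• inner B x y‖ ≤ ε / 2 :=
        (pow_le_pow_iff_left₀ (norm_nonneg _) (by positivity) two_ne_zero).mp hxy
    _ < ε := half_lt_self hε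

theorem dense_op_smul_of_rangeIdeal_subset_closure {ι : Type*} {f : ι → B}
    (hf : rangeIdeal B E ⊆ closure (Set.range f)) :
    Dense {z : E | ∃ (x : E) (i : ι), z = x <• f i} := by
  intro z
  have hcont : Continuous (z <• · : B → E) := (xhat z).toFun.continuous
  have hgen : {a : B | ∃ x y : E, a = inner B x y} ⊆ closure (Set.range f) :=
    fun a ha => hf (subset_closure (Submodule.subset_span ha))
  refine closure_minimal ?_ isClosed_closure (mem_closure_image_op_smul_inner (B := B) z)
  calc (z <• ·) '' {a : B | ∃ x y : E, a = inner B x y}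
      ⊆ (z <• ·) '' closure (Set.range f) := Set.image_mono hgen
    _ ⊆ closure ((z <• ·) '' Set.range f) := image_closure_subset_closure_image hcont
    _ ⊆ closure {z : E | ∃ (x : E) (i : ι), z = x <• f i} := by
        refine closure_mono ?_
        rintro _ ⟨_, ⟨i, rfl⟩, rfl⟩
        exact ⟨z, i, rfl⟩

end

theorem multiplicity_not_unique_nonfull_general
    {B : Type*} [CStarAlgebra B] [PartialOrder B] [StarOrderedRing B]
    {E : Type*} [NormedAddCommGroup E] [NormedSpace ℂ E] [SMul Bᵐᵒᵖ E] [CStarModule B E]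
    (hNF : ¬ IsFull B E)
    {F₂ : Type*} [NormedAddCommGroup F₂] [NormedSpace ℂ F₂] [SMul Bᵐᵒᵖ F₂] [CStarModule B F₂]
    (ρ₂ : Corr B B F₂)
    -- `j` realizes `F₂` as the range ideal `B_E ⊆ B`, as a correspondence over `B`:
    (j : F₂ →L[ℂ] B)
    (hj_inner : ∀ s s' : F₂, star (j s) * j s' = inner (𝕜 := B) s s')
    (hj_left : ∀ (b : B) (s : F₂), j ((ρ₂.act b) s) = b * j s)
    (hj_range : closure (Set.range j) = rangeIdeal B E) :
    -- `a ⊙ id` acts as `a` under both identifications: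
    (∀ (a : Adj B E E) (x : E) (b : B), a (x <• b) = (a x) <• b) ∧
    -- `x ⊙ b ↦ xb` is a unitary `E ⊙ B → E`:
    (∀ (x x' : E) (b b' : B),
      inner (𝕜 := B) (x <• b) (x' <• b')
        = inner (𝕜 := B) b ((leftMult (inner (𝕜 := B) x x')) b')) ∧
    Dense (↑(Submodule.span ℂ {z : E | ∃ (x : E) (b : B), z = x <• b}) : Set E) ∧
    -- `x ⊙ s ↦ x·j(s)` is a unitary `E ⊙ B_E → E`:
    (∀ (x x' : E) (s s' : F₂),
      inner (𝕜 := B) (x <• j s) (x' <• j s')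
        = inner (𝕜 := B) s ((ρ₂.act (inner (𝕜 := B) x x')) s')) ∧
    Dense (↑(Submodule.span ℂ {z : E | ∃ (x : E) (s : F₂), z = x <• j s}) : Set E) ∧
    -- but `B` and `B_E` are not isomorphic as correspondences from `B` to `B`:
    ¬ ∃ v : B →L[ℂ] F₂, Function.Bijective v ∧
        (∀ b b' : B, inner (𝕜 := B) (v b) (v b') = star b * b') ∧
        (∀ b c : B, v (c * b) = (ρ₂.act c) (v b)) ∧
        (∀ b c : B, v (b * c) = (v b) <• c) := by
  refine ⟨Adj.map_op_smul, fun x x' b b' => ?_, ?_, fun x x' s s' => ?_, ?_, ?_⟩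
  · rw [CStarModule.inner_op_smul_op_smul, mul_assoc]
    rfl
  · refine (dense_op_smul_of_rangeIdeal_subset_closure (f := id) ?_).mono Submodule.subset_span
    simp
  · rw [CStarModule.inner_op_smul_op_smul, ← hj_inner, hj_left, mul_assoc]
  · exact (dense_op_smul_of_rangeIdeal_subset_closure hj_range.ge).mono Submodule.subset_span
  · rintro ⟨v, -, hv_inner, -, -⟩
    have hu : j (v 1) ∈ rangeIdeal B E := hj_range ▸ subset_closure ⟨v 1, rfl⟩
    refine hNF (isFull_of_star_mul_self_eq_one hu ?_)
    rw [hj_inner, hv_inner, star_one, one_mul]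

/-- Failure of uniqueness in the non-full case (Remark 1.9).  If `E` is a non-full
Hilbert `B`-module, then the trivial correspondence `B` and the range ideal `B_E`
(realized as a correspondence `F₂` from `B` to `B` via an isometric bimodule embedding
`j : F₂ → B` with closed range `B_E`) are non-isomorphic correspondences from `B` to `B`
which both induce the identity on `E`:  `E ⊙ B ≅ E ≅ E ⊙ B_E` with `a ⊙ id` acting as
`a` in both cases. -/
theorem multiplicity_not_unique_nonfull
    {B : Type*} [CStarAlgebra B] [PartialOrder B] [StarOrderedRing B]
    {E : Type*} [NormedAddCommGroup E] [NormedSpace ℂ E] [SMul Bᵐᵒᵖ E] [CStarModule B E]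
    [CompleteSpace E]
    (hNF : ¬ IsFull B E)
    {F₂ : Type*} [NormedAddCommGroup F₂] [NormedSpace ℂ F₂] [SMul Bᵐᵒᵖ F₂] [CStarModule B F₂]
    [CompleteSpace F₂] (ρ₂ : Corr B B F₂)
    -- `j` realizes `F₂` as the range ideal `B_E ⊆ B`, as a correspondence over `B`:
    (j : F₂ →L[ℂ] B)
    (hj_inner : ∀ s s' : F₂, star (j s) * j s' = inner (𝕜 := B) s s')
    (hj_left : ∀ (b : B) (s : F₂), j ((ρ₂.act b) s) = b * j s)
    (hj_right : ∀ (s : F₂) (b : B), j (s <• b) = j s * b)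
    (hj_range : closure (Set.range j) = rangeIdeal B E) :
    -- `a ⊙ id` acts as `a` under both identifications:
    (∀ (a : Adj B E E) (x : E) (b : B), a (x <• b) = (a x) <• b) ∧
    -- `x ⊙ b ↦ xb` is a unitary `E ⊙ B → E`:
    (∀ (x x' : E) (b b' : B),
      inner (𝕜 := B) (x <• b) (x' <• b')
        = inner (𝕜 := B) b ((leftMult (inner (𝕜 := B) x x')) b')) ∧
    Dense (↑(Submodule.span ℂ {z : E | ∃ (x : E) (b : B), z = x <• b}) : Set E) ∧
    -- `x ⊙ s ↦ x·j(s)` is a unitary `E ⊙ B_E → E`: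
    (∀ (x x' : E) (s s' : F₂),
      inner (𝕜 := B) (x <• j s) (x' <• j s')
        = inner (𝕜 := B) s ((ρ₂.act (inner (𝕜 := B) x x')) s')) ∧
    Dense (↑(Submodule.span ℂ {z : E | ∃ (x : E) (s : F₂), z = x <• j s}) : Set E) ∧
    -- but `B` and `B_E` are not isomorphic as correspondences from `B` to `B`:
    ¬ ∃ v : B →L[ℂ] F₂, Function.Bijective v ∧
        (∀ b b' : B, inner (𝕜 := B) (v b) (v b') = star b * b') ∧
        (∀ b c : B, v (c * b) = (ρ₂.act c) (v b)) ∧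
        (∀ b c : B, v (b * c) = (v b) <• c) :=
  multiplicity_not_unique_nonfull_general hNF ρ₂ j hj_inner hj_left hj_range

end CStarMod
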